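/- (Aczél–Dhombres, Theorem 11.17) Let E be a real inner product space of dimension at least 2. A continuous function f : E → ℝ is orthogonally additive (i.e. f(x + y) = f(x) + f(y) whenever ⟨x, y⟩ = 0) if and only if there exist a real constant a and a continuous linear functional h : E → ℝ such that f(x) = a·‖x‖² + h(x) for all x ∈ E. -/

import Mathlib

/-!
Split `f` into its even and odd parts, both orthogonally additive. The even part `g` takes equal
values at vectors of equal norm (these are `u + v` and `u - v` with `u ⊥ v`), so
`g x = φ (‖x‖ ^ 2)` where, by Pythagoras, `φ` is additive on `[0, ∞)`; continuity makes `φ` linear.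
The odd part `k` is additive along every line `ℝ • e`: for `w ⊥ e` with `‖w‖ = ‖e‖` and `s t ≥ 0`,
the vectors `s • e + √(s t) • w` and `t • e - √(s t) • w` are orthogonal. Writing `y = c • x + w`
with `w ⊥ x` then makes `k` additive, and continuity makes it linear.
-/

open scoped RealInnerProductSpace

lemma exists_inner_eq_zero_norm_eq {E : Type*} [NormedAddCommGroup E] [InnerProductSpace ℝ E]
    (hdim : 2 ≤ Module.rank ℝ E) (x : E) {r : ℝ} (hr : 0 ≤ r) :
    ∃ y : E, ⟪x, y⟫ = 0 ∧ ‖y‖ = r := by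
  have hK : (ℝ ∙ x)ᗮ ≠ ⊥ := by
    rw [Ne, Submodule.orthogonal_eq_bot_iff]
    intro htop
    have : Module.rank ℝ E ≤ 1 := by
      rw [← rank_top ℝ E, ← htop]
      simpa using rank_span_le (R := ℝ) ({x} : Set E)
    exact absurd (hdim.trans this) (by norm_num)
  obtain ⟨z, hz, hz0⟩ := Submodule.ne_bot_iff _ |>.1 hK
  refine ⟨(r / ‖z‖) • z, ?_, ?_⟩
  · rw [real_inner_smul_right, Submodule.mem_orthogonal_singleton_iff_inner_right.1 hz, mul_zero]
  · rw [norm_smul, Real.norm_eq_abs, abs_div, abs_norm, abs_of_nonneg hr,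
      div_mul_cancel₀ _ (norm_ne_zero_iff.2 hz0)]

lemma Real.eq_mul_of_continuous_of_map_add_of_nonneg {φ : ℝ → ℝ} (hφ : Continuous φ)
    (hadd : ∀ s t, 0 ≤ s → 0 ≤ t → φ (s + t) = φ s + φ t) {s : ℝ} (hs : 0 ≤ s) :
    φ s = s * φ 1 := by
  set ψ : ℝ → ℝ := fun s => φ s⁺ - φ s⁻ with hψ_def
  -- `ψ` is the odd extension of `φ|[0, ∞)`; `hparts` is `ψ`'s additivity with every term moved
  -- to the side where it is nonnegative.
  have hψ_add : ∀ s t, ψ (s + t) = ψ s + ψ t := by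
    intro s t
    have hparts : s⁺ + t⁺ + (s + t)⁻ = (s + t)⁺ + (s⁻ + t⁻) := by
      linarith [posPart_sub_negPart s, posPart_sub_negPart t, posPart_sub_negPart (s + t)]
    have := congrArg φ hparts
    rw [hadd _ _ (by positivity) (negPart_nonneg _), hadd _ _ (posPart_nonneg _) (posPart_nonneg _),
      hadd _ _ (posPart_nonneg _) (by positivity), hadd _ _ (negPart_nonneg _) (negPart_nonneg _)]
      at this
    simp only [hψ_def]
    linarith
  have hψ_cont : Continuous ψ := by
    simp only [hψ_def, posPart_def, negPart_def]
    fun_prop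
  have hψ_lin := map_real_smul (AddMonoidHom.mk' ψ hψ_add) hψ_cont s 1
  have hφ0 : φ 0 = 0 := by simpa using hadd 0 0 le_rfl le_rfl
  simpa [hψ_def, posPart_eq_self.2 hs, negPart_eq_zero.2 hs, hφ0] using hψ_lin

def IsOrthogonallyAdditive {E : Type*} [NormedAddCommGroup E] [InnerProductSpace ℝ E]
    (f : E → ℝ) : Prop :=
  ∀ x y : E, ⟪x, y⟫ = 0 → f (x + y) = f x + f y

namespace IsOrthogonallyAdditive

variable {E : Type*} [NormedAddCommGroup E] [InnerProductSpace ℝ E] {f : E → ℝ}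

lemma comp_neg (hf : IsOrthogonallyAdditive f) : IsOrthogonallyAdditive (fun x => f (-x)) := by
  intro x y hxy
  simpa only [neg_add] using hf (-x) (-y) (by rwa [inner_neg_neg])

lemma add {g : E → ℝ} (hf : IsOrthogonallyAdditive f) (hg : IsOrthogonallyAdditive g) :
    IsOrthogonallyAdditive (fun x => f x + g x) := by
  intro x y hxy
  simp only [hf x y hxy, hg x y hxy]
  ring

lemma sub {g : E → ℝ} (hf : IsOrthogonallyAdditive f) (hg : IsOrthogonallyAdditive g) :
    IsOrthogonallyAdditive (fun x => f x - g x) := by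
  intro x y hxy
  simp only [hf x y hxy, hg x y hxy]
  ring

lemma div_const (hf : IsOrthogonallyAdditive f) (c : ℝ) :
    IsOrthogonallyAdditive (fun x => f x / c) := by
  intro x y hxy
  simp only [hf x y hxy, add_div]

lemma eq_of_norm_eq_of_even (hf : IsOrthogonallyAdditive f) (heven : ∀ x, f (-x) = f x)
    {x y : E} (hxy : ‖x‖ = ‖y‖) : f x = f y := by
  set u : E := (2 : ℝ)⁻¹ • (x + y)
  set v : E := (2 : ℝ)⁻¹ • (x - y)
  have huv : ⟪u, v⟫ = 0 := by
    rw [real_inner_smul_left, real_inner_smul_right, inner_add_left, inner_sub_right,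
      inner_sub_right, real_inner_self_eq_norm_sq, real_inner_self_eq_norm_sq,
      real_inner_comm y x, hxy]
    ring
  have hx : x = u + v := by module
  have hy : y = u + -v := by module
  rw [hx, hy, hf _ _ huv, hf _ _ (by rwa [inner_neg_right, neg_eq_zero]), heven]

lemma map_smul_add_smul_of_odd (hdim : 2 ≤ Module.rank ℝ E) (hf : IsOrthogonallyAdditive f)
    (hodd : ∀ x, f (-x) = -f x)
    (e : E) (s t : ℝ) : f ((s + t) • e) = f (s • e) + f (t • e) := by
  obtain ⟨w, hew, hw⟩ := exists_inner_eq_zero_norm_eq hdim e (norm_nonneg e)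
  have h_nonneg : ∀ s t : ℝ, 0 ≤ s * t → f ((s + t) • e) = f (s • e) + f (t • e) := by
    intro s t hst
    have horth : ∀ a b : ℝ, ⟪a • e, b • w⟫ = 0 := fun a b => by
      rw [real_inner_smul_left, real_inner_smul_right, hew, mul_zero, mul_zero]
    set u := √(s * t)
    have hinner : ⟪s • e + u • w, t • e + (-u) • w⟫ = 0 := by
      have hwe : ⟪w, e⟫ = 0 := by rwa [real_inner_comm]
      simp only [inner_add_left, inner_add_right, real_inner_smul_left, real_inner_smul_right,
        real_inner_self_eq_norm_sq, hew, hwe, hw]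
      have : u * u = s * t := Real.mul_self_sqrt hst
      linear_combination (-‖e‖ ^ 2) * this
    have hsum : (s + t) • e = (s • e + u • w) + (t • e + (-u) • w) := by module
    rw [hsum, hf _ _ hinner, hf _ _ (horth _ _), hf _ _ (horth _ _), neg_smul, hodd]
    ring
  rcases le_total 0 (s * t) with hst | hst
  · exact h_nonneg s t hst
  -- Otherwise `s + t` has the sign of `s` or of `t`, and we split `s • e` or `t • e` instead.
  rcases le_or_gt 0 ((s + t) * -t) with h | h
  · have := h_nonneg (s + t) (-t) h
    rw [add_neg_cancel_right, neg_smul, hodd] at this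
    linarith
  · have h' : 0 ≤ (s + t) * -s := by
      nlinarith [mul_nonpos_of_nonneg_of_nonpos (sq_nonneg (s + t)) hst]
    have := h_nonneg (s + t) (-s) h'
    rw [add_neg_cancel_comm, neg_smul, hodd] at this
    linarith

lemma map_add_of_odd (hdim : 2 ≤ Module.rank ℝ E) (hf : IsOrthogonallyAdditive f)
    (hodd : ∀ x, f (-x) = -f x) (x y : E) : f (x + y) = f x + f y := by
  obtain ⟨_, hcx, w, hw, rfl⟩ := (ℝ ∙ x).exists_add_mem_mem_orthogonal y
  obtain ⟨c, rfl⟩ := Submodule.mem_span_singleton.1 hcx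
  have hxw : ∀ a : ℝ, ⟪a • x, w⟫ = 0 := fun a => by
    rw [real_inner_smul_left, Submodule.mem_orthogonal_singleton_iff_inner_right.1 hw, mul_zero]
  have hline := hf.map_smul_add_smul_of_odd hdim hodd x 1 c
  rw [one_smul] at hline
  calc f (x + (c • x + w)) = f ((1 + c) • x + w) := by rw [add_smul, one_smul, add_assoc]
    _ = f x + f (c • x + w) := by rw [hf _ _ (hxw _), hline, hf _ _ (hxw _), add_assoc]

lemma exists_eq_mul_norm_sq_of_even (hdim : 2 ≤ Module.rank ℝ E) (hf : IsOrthogonallyAdditive f)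
    (heven : ∀ x, f (-x) = f x)
    (hcont : Continuous f) : ∃ a : ℝ, ∀ x, f x = a * ‖x‖ ^ 2 := by
  obtain ⟨e, -, he⟩ := exists_inner_eq_zero_norm_eq hdim (0 : E) zero_le_one
  set φ : ℝ → ℝ := fun s => f (√s • e)
  have hf_eq : ∀ x, f x = φ (‖x‖ ^ 2) := fun x =>
    hf.eq_of_norm_eq_of_even heven (by
      rw [norm_smul, he, mul_one, Real.sqrt_sq (norm_nonneg x),
        Real.norm_of_nonneg (norm_nonneg x)])
  have hφ_add : ∀ s t, 0 ≤ s → 0 ≤ t → φ (s + t) = φ s + φ t := by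
    intro s t hs ht
    obtain ⟨y, hxy, hy⟩ := exists_inner_eq_zero_norm_eq hdim (√s • e) (Real.sqrt_nonneg t)
    have hnx : ‖√s • e‖ ^ 2 = s := by
      rw [norm_smul, he, mul_one, Real.norm_of_nonneg (Real.sqrt_nonneg s), Real.sq_sqrt hs]
    have hnxy : ‖√s • e + y‖ ^ 2 = s + t := by
      rw [norm_add_sq_real, hxy, hnx, hy, Real.sq_sqrt ht]
      ring
    rw [← hnxy, ← hf_eq, hf _ _ hxy, hf_eq, hf_eq y, hnx, hy, Real.sq_sqrt ht]
  have hφ_cont : Continuous φ := by fun_prop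
  refine ⟨φ 1, fun x => ?_⟩
  rw [hf_eq, Real.eq_mul_of_continuous_of_map_add_of_nonneg hφ_cont hφ_add (by positivity),
    mul_comm]

end IsOrthogonallyAdditive

lemma isOrthogonallyAdditive_mul_norm_sq_add {E : Type*} [NormedAddCommGroup E]
    [InnerProductSpace ℝ E] (a : ℝ) (h : E →L[ℝ] ℝ) :
    IsOrthogonallyAdditive (fun x : E => a * ‖x‖ ^ 2 + h x) := by
  intro x y hxy
  simp only [norm_add_sq_real, hxy, map_add]
  ring

/-- Aczél–Dhombres, Theorem 11.17: on a real inner product space of dimension at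
least 2, a continuous function is orthogonally additive iff it is of the form
`a * ‖x‖ ^ 2 + h x` for a constant `a` and a continuous linear functional `h`. -/
theorem aczel_dhombres_orthogonally_additive (E : Type*) [NormedAddCommGroup E]
    [InnerProductSpace ℝ E] (hdim : 2 ≤ Module.rank ℝ E) (f : E → ℝ)
    (hf : Continuous f) :
    (∀ x y : E, ⟪x, y⟫ = 0 → f (x + y) = f x + f y) ↔
      ∃ (a : ℝ) (h : E →L[ℝ] ℝ), ∀ x : E, f x = a * ‖x‖ ^ 2 + h x := by
  refine ⟨fun hadd => ?_, fun ⟨a, h, hfx⟩ => ?_⟩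
  · have hadd : IsOrthogonallyAdditive f := hadd
    obtain ⟨a, ha⟩ := (hadd.add hadd.comp_neg |>.div_const 2).exists_eq_mul_norm_sq_of_even hdim
      (fun x => by simp only [neg_neg, add_comm]) (by fun_prop)
    set k : E →+ ℝ := AddMonoidHom.mk' (fun x => (f x - f (-x)) / 2)
      ((hadd.sub hadd.comp_neg |>.div_const 2).map_add_of_odd hdim
        fun x => by simp only [neg_neg]; ring)
    have hk : Continuous k := show Continuous fun x => (f x - f (-x)) / 2 by fun_prop
    refine ⟨a, k.toRealLinearMap hk, fun x => ?_⟩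
    have hsplit : f x = (f x + f (-x)) / 2 + (f x - f (-x)) / 2 := by ring
    rw [hsplit, ha]
    rfl
  · have key := isOrthogonallyAdditive_mul_norm_sq_add a h
    rwa [← funext hfx] at key
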